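/- arXiv:math/0601620 — 2 statements merged into one kernel-verified Lean document; each statement's English description precedes it below -/
import Mathlib

section
/- Let j : A → X be a closed embedding of topological spaces and f : A → Y a continuous map, and let P be the pushout of j and f, with co-projections k : X → P and l : Y → P (so the square with maps f, j, l, k is a pushout square of topological spaces). Then l : Y → P is a closed embedding, and the same square is also a pullback square: the map a ↦ (j(a), f(a)) is a homeomorphism from A onto the fiber product X ×_P Y = {(x,y) : k(x) = l(y)}. -/
open Topology

universe u

/-- A commutative square of topological spaces
`f : A → Y`, `j : A → X`, `J : Y → Z`, `F : X → Z`
is a pushout square if it commutes and satisfies the universal property of the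
pushout in the category of topological spaces. -/
def IsPushoutSquare {A Y X Z : Type u} [TopologicalSpace A] [TopologicalSpace Y]
    [TopologicalSpace X] [TopologicalSpace Z]
    (f : C(A, Y)) (j : C(A, X)) (J : C(Y, Z)) (F : C(X, Z)) : Prop :=
  (∀ a, J (f a) = F (j a)) ∧
  ∀ (T : Type u) [TopologicalSpace T] (u : C(X, T)) (v : C(Y, T)),
    (∀ a, u (j a) = v (f a)) →
    ∃! w : C(Z, T), (∀ x, w (F x) = u x) ∧ (∀ y, w (J y) = v y)

/-!
Testing the universal property against a set `T` with the indiscrete topology shows that it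
determines `P` as a set: `k x ↦ f '' j⁻¹{x}`, `l y ↦ {y}` is a well-defined map `P → Set Y`
because `j` is injective, so `l` is injective and `k x = l y` only for `(x, y) = (j a, f a)`.
Testing it against the Sierpiński space shows that `P` carries the quotient topology of
`X ⊕ Y`; hence `l '' C` is closed for closed `C`, its preimages `j '' f⁻¹ C` and `C` being
closed. Finally `a ↦ (j a, f a)` is an embedding onto the fibre product because `j` is one.
-/

namespace IsPushoutSquare

variable {A X Y P : Type u} [TopologicalSpace A] [TopologicalSpace X] [TopologicalSpace Y]
  [TopologicalSpace P] {j : C(A, X)} {f : C(A, Y)} {k : C(X, P)} {l : C(Y, P)}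

theorem hom_ext (hsq : IsPushoutSquare f j l k) {T : Type u} [TopologicalSpace T]
    {w w' : C(P, T)} (hk : ∀ x, w (k x) = w' (k x)) (hl : ∀ y, w (l y) = w' (l y)) :
    w = w' :=
  (hsq.2 T (w'.comp k) (w'.comp l) fun a => congrArg w' (hsq.1 a).symm).unique
    ⟨hk, hl⟩ ⟨fun _ => rfl, fun _ => rfl⟩

protected theorem funext (hsq : IsPushoutSquare f j l k) {T : Type u} {w w' : P → T}
    (hk : ∀ x, w (k x) = w' (k x)) (hl : ∀ y, w (l y) = w' (l y)) : w = w' := by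
  let _ : TopologicalSpace T := ⊤
  exact congrArg DFunLike.coe
    (hsq.hom_ext (w := ⟨w, continuous_top⟩) (w' := ⟨w', continuous_top⟩) hk hl)

theorem exists_desc (hsq : IsPushoutSquare f j l k) {T : Type u} (u : X → T) (v : Y → T)
    (huv : ∀ a, u (j a) = v (f a)) :
    ∃ w : P → T, (∀ x, w (k x) = u x) ∧ ∀ y, w (l y) = v y := by
  let _ : TopologicalSpace T := ⊤
  obtain ⟨w, hw, -⟩ := hsq.2 T ⟨u, continuous_top⟩ ⟨v, continuous_top⟩ huv
  exact ⟨w, hw⟩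

theorem isOpen_iff (hsq : IsPushoutSquare f j l k) {s : Set P} :
    IsOpen s ↔ IsOpen (k ⁻¹' s) ∧ IsOpen (l ⁻¹' s) := by
  refine ⟨fun hs => ⟨hs.preimage k.continuous, hs.preimage l.continuous⟩, fun ⟨hk, hl⟩ => ?_⟩
  obtain ⟨w, ⟨hwk, hwl⟩, -⟩ := hsq.2 (ULift Prop)
    ⟨fun x => ULift.up (k x ∈ s), continuous_uliftUp.comp (continuous_Prop.2 hk)⟩
    ⟨fun y => ULift.up (l y ∈ s), continuous_uliftUp.comp (continuous_Prop.2 hl)⟩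
    (fun a => by simp only [ContinuousMap.coe_mk, hsq.1 a])
  have hw : ⇑w = fun p => ULift.up (p ∈ s) := hsq.funext hwk hwl
  simpa [hw] using continuous_Prop.1 (continuous_uliftDown.comp w.continuous)

theorem isClosed_iff (hsq : IsPushoutSquare f j l k) {s : Set P} :
    IsClosed s ↔ IsClosed (k ⁻¹' s) ∧ IsClosed (l ⁻¹' s) := by
  simp only [← isOpen_compl_iff, hsq.isOpen_iff, Set.preimage_compl]

theorem exists_fiberMap (hsq : IsPushoutSquare f j l k) (hj : Function.Injective j) :
    ∃ w : P → Set Y, (∀ x, w (k x) = f '' (j ⁻¹' {x})) ∧ ∀ y, w (l y) = {y} :=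
  hsq.exists_desc _ _ fun a => by
    rw [← Set.image_singleton, hj.preimage_image, Set.image_singleton]

theorem injective_right (hsq : IsPushoutSquare f j l k) (hj : Function.Injective j) :
    Function.Injective l := by
  obtain ⟨w, -, hwl⟩ := hsq.exists_fiberMap hj
  intro y y' h
  simpa only [hwl, Set.singleton_eq_singleton_iff] using congrArg w h

theorem left_eq_right_iff (hsq : IsPushoutSquare f j l k) (hj : Function.Injective j)
    {x : X} {y : Y} : k x = l y ↔ ∃ a, j a = x ∧ f a = y := by
  refine ⟨fun h => ?_, fun ⟨a, hja, hfa⟩ => hja ▸ hfa ▸ (hsq.1 a).symm⟩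
  obtain ⟨w, hwk, hwl⟩ := hsq.exists_fiberMap hj
  obtain ⟨a, hja, hfa⟩ : y ∈ f '' (j ⁻¹' {x}) := by
    rw [← hwk, h, hwl]
    exact Set.mem_singleton y
  exact ⟨a, hja, hfa⟩

theorem isClosedMap_right (hsq : IsPushoutSquare f j l k) (hj : IsClosedEmbedding j) :
    IsClosedMap l := by
  intro C hC
  have hk : k ⁻¹' (l '' C) = j '' (f ⁻¹' C) := by
    ext x
    simp only [Set.mem_preimage, Set.mem_image, eq_comm (b := k x),
      hsq.left_eq_right_iff hj.injective]
    grind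
  rw [hsq.isClosed_iff, hk, Set.preimage_image_eq C (hsq.injective_right hj.injective)]
  exact ⟨hj.isClosedMap _ (hC.preimage f.continuous), hC⟩

theorem isClosedEmbedding_right (hsq : IsPushoutSquare f j l k) (hj : IsClosedEmbedding j) :
    IsClosedEmbedding l :=
  .of_continuous_injective_isClosedMap l.continuous (hsq.injective_right hj.injective)
    (hsq.isClosedMap_right hj)

def toFiberProduct (hsq : IsPushoutSquare f j l k) (a : A) : {q : X × Y // k q.1 = l q.2} :=
  ⟨(j a, f a), (hsq.1 a).symm⟩

theorem isEmbedding_toFiberProduct (hsq : IsPushoutSquare f j l k) (hj : IsEmbedding j) :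
    IsEmbedding hsq.toFiberProduct :=
  .of_comp ((j.continuous.prodMk f.continuous).subtype_mk _) (continuous_fst.comp continuous_subtype_val) hj

theorem surjective_toFiberProduct (hsq : IsPushoutSquare f j l k) (hj : Function.Injective j) :
    Function.Surjective hsq.toFiberProduct := by
  rintro ⟨⟨x, y⟩, hxy⟩
  obtain ⟨a, rfl, rfl⟩ := (hsq.left_eq_right_iff hj).1 hxy
  exact ⟨a, rfl⟩

end IsPushoutSquare

/-- If `j : A → X` is a closed embedding, `f : A → Y` is continuous, and `P` is the
pushout of `j` and `f` with co-projections `k : X → P` and `l : Y → P`, then `l` is a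
closed embedding and the pushout square is also a pullback square: `a ↦ (j a, f a)` is
a homeomorphism from `A` onto the fiber product `X ×_P Y = {(x, y) | k x = l y}`. -/
theorem closedEmbedding_pushout_and_pullback
    {A X Y P : Type u} [TopologicalSpace A] [TopologicalSpace X] [TopologicalSpace Y]
    [TopologicalSpace P]
    (j : C(A, X)) (f : C(A, Y)) (k : C(X, P)) (l : C(Y, P))
    (hj : IsClosedEmbedding j) (hsq : IsPushoutSquare f j l k) :
    IsClosedEmbedding l ∧
    ∃ e : A ≃ₜ {q : X × Y // k q.1 = l q.2}, ∀ a, (e a : X × Y) = (j a, f a) :=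
  ⟨hsq.isClosedEmbedding_right hj,
    (hsq.isEmbedding_toFiberProduct hj.isEmbedding).toHomeomorphOfSurjective
      (hsq.surjective_toFiberProduct hj.injective), fun _ => rfl⟩
end

section
/- Let T be a locally compact topological space. If the commutative square of topological spaces with maps f : A → Y, j : A → X, J : Y → P, F : X → P is a pushout square, then the square obtained by taking the product with T, i.e., with maps f × id_T : A × T → Y × T, j × id_T : A × T → X × T, J × id_T : Y × T → P × T, F × id_T : X × T → P × T, is again a pushout square of topological spaces. -/
universe u

/-- Taking the product with a locally compact space `T` preserves pushout squares of
topological spaces. -/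
theorem isPushoutSquare_prod_of_locallyCompact
    {A Y X P T : Type u} [TopologicalSpace A] [TopologicalSpace Y] [TopologicalSpace X]
    [TopologicalSpace P] [TopologicalSpace T] [LocallyCompactSpace T]
    (f : C(A, Y)) (j : C(A, X)) (J : C(Y, P)) (F : C(X, P))
    (hsq : IsPushoutSquare f j J F) :
    IsPushoutSquare (f.prodMap (ContinuousMap.id T)) (j.prodMap (ContinuousMap.id T))
      (J.prodMap (ContinuousMap.id T)) (F.prodMap (ContinuousMap.id T)) := by
  obtain ⟨hcomm, hup⟩ := hsq
  constructor
  · rintro ⟨a, t⟩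
    simp [ContinuousMap.prodMap, hcomm a]
  · intro W _ u v huv
    obtain ⟨w, ⟨hw1, hw2⟩, hwu⟩ := hup C(T, W) u.curry v.curry
      (fun a => by ext t; exact huv (a, t))
    refine ⟨w.uncurry, ⟨fun x => ?_, fun y => ?_⟩, ?_⟩
    · obtain ⟨x, t⟩ := x
      exact congrFun (congrArg DFunLike.coe (hw1 x)) t
    · obtain ⟨y, t⟩ := y
      exact congrFun (congrArg DFunLike.coe (hw2 y)) t
    intro w₂ ⟨h1, h2⟩
    have : w₂.curry = w := hwu w₂.curry
      ⟨fun x => by ext t; exact h1 (x, t), fun y => by ext t; exact h2 (y, t)⟩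
    ext ⟨p, t⟩
    exact congrFun (congrArg (fun g => DFunLike.coe (g p)) this) t
end
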